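/- arXiv:1608.01828 — 6 statements merged into one kernel-verified Lean document; each statement's English description precedes it below -/
import Mathlib

section
/- Let H > 0, γ₀ ≥ 0, V > 0, B > 0. Then the limit as T → ∞ of ∫₀ᵀ B·log₂(1 + γ₀/(H² + (−VT/2 + Vt)²)) dt equals (2πB/(V·ln 2))·(√(H² + γ₀) − H). In particular, the total throughput of an infinitely long straight-and-level flyover at speed V is finite. -/
open Real Filter MeasureTheory intervalIntegral

/-!
With `b = √(H² + γ₀)` the rate is `B (log (x² + b²) - log (x² + H²)) / log 2`, and
`x log (x² + c²) - 2x + 2c arctan (x / c)` is an odd antiderivative of `log (x² + c²)`.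
After the substitution `x = V (t - T/2)` the throughput over `[0, T]` is therefore
`2B / (V log 2)` times the difference of the two antiderivatives at `VT/2`. In that difference
the term `y log ((y² + b²) / (y² + H²)) = O(1/y)` vanishes at infinity, and the arctangent
terms tend to `π b - π H`.
-/

noncomputable def logSqAddSqAntideriv (c x : ℝ) : ℝ :=
  x * log (x ^ 2 + c ^ 2) - 2 * x + 2 * c * arctan (x / c)

section

variable {c : ℝ}

theorem hasDerivAt_logSqAddSqAntideriv (hc : c ≠ 0) (x : ℝ) :
    HasDerivAt (logSqAddSqAntideriv c) (log (x ^ 2 + c ^ 2)) x := by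
  have hpos : x ^ 2 + c ^ 2 ≠ 0 := by positivity
  have hlog : HasDerivAt (fun x => log (x ^ 2 + c ^ 2)) (2 * x / (x ^ 2 + c ^ 2)) x := by
    simpa using ((hasDerivAt_pow 2 x).add_const (c ^ 2)).log hpos
  have harctan : HasDerivAt (fun x => arctan (x / c)) (1 / (1 + (x / c) ^ 2) * (1 / c)) x :=
    ((hasDerivAt_id' x).div_const c).arctan
  refine ((((hasDerivAt_id' x).mul hlog).sub ((hasDerivAt_id' x).const_mul 2)).add
    (harctan.const_mul (2 * c))).congr_deriv ?_
  field_simp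
  ring

theorem logSqAddSqAntideriv_neg (c x : ℝ) :
    logSqAddSqAntideriv c (-x) = -logSqAddSqAntideriv c x := by
  simp only [logSqAddSqAntideriv, neg_sq, neg_div, arctan_neg]
  ring

theorem continuous_log_sq_add_sq (hc : c ≠ 0) : Continuous fun x => log (x ^ 2 + c ^ 2) :=
  (by fun_prop : Continuous fun x : ℝ => x ^ 2 + c ^ 2).log fun x => by positivity

theorem tendsto_two_mul_mul_arctan_div (hc : 0 < c) :
    Tendsto (fun y => 2 * c * arctan (y / c)) atTop (nhds (π * c)) := by
  have := ((tendsto_arctan_atTop.mono_right nhdsWithin_le_nhds).comp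
    (tendsto_id.atTop_div_const hc)).const_mul (2 * c)
  rw [show 2 * c * (π / 2) = π * c by ring] at this
  exact this

end

theorem tendsto_mul_log_one_add_div {a c : ℝ} (ha : 0 ≤ a) (hc : 0 ≤ c) :
    Tendsto (fun y => y * log (1 + a / (c + y ^ 2))) atTop (nhds 0) := by
  refine tendsto_of_tendsto_of_tendsto_of_le_of_le' tendsto_const_nhds
    ((tendsto_const_nhds (x := a)).div_atTop tendsto_id) ?_ ?_
  all_goals filter_upwards [eventually_gt_atTop 0] with y hy
  · have : 0 ≤ a / (c + y ^ 2) := by positivity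
    exact mul_nonneg hy.le (log_nonneg (by linarith))
  · calc y * log (1 + a / (c + y ^ 2)) ≤ y * (a / (c + y ^ 2)) := by
          gcongr
          linarith [log_le_sub_one_of_pos (by positivity : 0 < 1 + a / (c + y ^ 2))]
      _ ≤ a / y := by
          rw [mul_div_assoc', div_le_div_iff₀ (by positivity) hy]
          nlinarith [mul_nonneg ha hc]

section

variable {H b : ℝ}

theorem log_one_add_div_sq_add_sq (hH : H ≠ 0) (hb : b ≠ 0) (x : ℝ) :
    log (1 + (b ^ 2 - H ^ 2) / (H ^ 2 + x ^ 2)) = log (x ^ 2 + b ^ 2) - log (x ^ 2 + H ^ 2) := by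
  have hH' : H ^ 2 + x ^ 2 ≠ 0 := by positivity
  rw [← log_div (by positivity) (by positivity)]
  congr 1
  field_simp
  ring

theorem integral_log_sq_add_sq_sub_log_sq_add_sq (hH : H ≠ 0) (hb : b ≠ 0) (y : ℝ) :
    ∫ x in -y..y, (log (x ^ 2 + b ^ 2) - log (x ^ 2 + H ^ 2)) =
      2 * (logSqAddSqAntideriv b y - logSqAddSqAntideriv H y) := by
  rw [integral_eq_sub_of_hasDerivAt
    (fun x _ => (hasDerivAt_logSqAddSqAntideriv hb x).sub (hasDerivAt_logSqAddSqAntideriv hH x))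
    (((continuous_log_sq_add_sq hb).sub (continuous_log_sq_add_sq hH)).intervalIntegrable _ _)]
  simp only [Pi.sub_apply, logSqAddSqAntideriv_neg]
  ring

theorem tendsto_logSqAddSqAntideriv_sub (hH : 0 < H) (hHb : H ≤ b) :
    Tendsto (fun y => logSqAddSqAntideriv b y - logSqAddSqAntideriv H y) atTop
      (nhds (π * (b - H))) := by
  have hb : 0 < b := hH.trans_le hHb
  have hsplit : ∀ y, logSqAddSqAntideriv b y - logSqAddSqAntideriv H y =
      y * log (1 + (b ^ 2 - H ^ 2) / (H ^ 2 + y ^ 2)) +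
        (2 * b * arctan (y / b) - 2 * H * arctan (y / H)) := by
    intro y
    rw [log_one_add_div_sq_add_sq hH.ne' hb.ne', logSqAddSqAntideriv, logSqAddSqAntideriv]
    ring
  simp only [hsplit]
  have hlim := (tendsto_mul_log_one_add_div (a := b ^ 2 - H ^ 2) (c := H ^ 2) (by nlinarith)
    (by positivity)).add
    ((tendsto_two_mul_mul_arctan_div hb).sub (tendsto_two_mul_mul_arctan_div hH))
  rwa [zero_add, ← mul_sub] at hlim

end

theorem stmt_5_general (H γ₀ V B : ℝ) (hH : 0 < H) (hγ : 0 ≤ γ₀) (hV : 0 < V) :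
    Tendsto (fun T : ℝ =>
        ∫ t in (0:ℝ)..T, B * Real.logb 2 (1 + γ₀ / (H ^ 2 + (-(V * T) / 2 + V * t) ^ 2)))
      atTop
      (nhds ((2 * π * B / (V * Real.log 2)) * (Real.sqrt (H ^ 2 + γ₀) - H))) := by
  set b := √(H ^ 2 + γ₀)
  have hbγ : b ^ 2 - H ^ 2 = γ₀ := by rw [sq_sqrt (by positivity)]; ring
  have hHb : H ≤ b := le_sqrt_of_sq_le (by linarith)
  have hb : b ≠ 0 := (hH.trans_le hHb).ne'
  have hintegral : ∀ T,
      ∫ t in (0:ℝ)..T, B * logb 2 (1 + γ₀ / (H ^ 2 + (-(V * T) / 2 + V * t) ^ 2)) =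
        B / (V * log 2) *
          (2 * (logSqAddSqAntideriv b (V * T / 2) - logSqAddSqAntideriv H (V * T / 2))) := by
    intro T
    simp only [logb, ← hbγ, log_one_add_div_sq_add_sq hH.ne' hb, mul_div_assoc']
    rw [intervalIntegral.integral_div, intervalIntegral.integral_const_mul,
      integral_comp_add_mul (fun x => log (x ^ 2 + b ^ 2) - log (x ^ 2 + H ^ 2)) hV.ne',
      mul_zero, add_zero, neg_div, neg_add_eq_sub, sub_half,
      integral_log_sq_add_sq_sub_log_sq_add_sq hH.ne' hb, smul_eq_mul]
    field_simp
  simp only [hintegral]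
  have hhalf : Tendsto (fun T => V * T / 2) atTop atTop :=
    (tendsto_id.const_mul_atTop hV).atTop_div_const two_pos
  have hlim := (((tendsto_logSqAddSqAntideriv_sub hH hHb).comp hhalf).const_mul 2).const_mul
    (B / (V * log 2))
  rw [show 2 * π * B / (V * log 2) * (b - H) = B / (V * log 2) * (2 * (π * (b - H))) by ring]
  exact hlim

theorem stmt_5 (H γ₀ V B : ℝ) (hH : 0 < H) (hγ : 0 ≤ γ₀) (hV : 0 < V) (hB : 0 < B) :
    Tendsto (fun T : ℝ =>
        ∫ t in (0:ℝ)..T, B * Real.logb 2 (1 + γ₀ / (H ^ 2 + (-(V * T) / 2 + V * t) ^ 2)))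
      atTop
      (nhds ((2 * π * B / (V * Real.log 2)) * (Real.sqrt (H ^ 2 + γ₀) - H))) :=
  stmt_5_general H γ₀ V B hH hγ hV
end

section
/- Let B, c1, c2, g, H > 0 and γ₀ ≥ 0. Define the circular-trajectory energy efficiency ee(V, r) = B·log₂(1 + γ₀/(H² + r²)) / ((c1 + c2/(g²r²))·V³ + c2/V) for V, r > 0. Then for each fixed r > 0, the map V ↦ ee(V, r) attains its maximum at V*(r) = (c2/(3(c1 + c2/(g²r²))))^(1/4), and the minimized denominator equals P*(r) = (3^(-3/4) + 3^(1/4))·c2^(3/4)·(c1 + c2/(g²r²))^(1/4). -/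
open Real

theorem stmt_6 (B c1 c2 g H γ₀ : ℝ) (hB : 0 < B) (hc1 : 0 < c1) (hc2 : 0 < c2)
    (hg : 0 < g) (hH : 0 < H) (hγ : 0 ≤ γ₀) (r : ℝ) (hr : 0 < r) :
    (∀ V > (0:ℝ),
      B * Real.logb 2 (1 + γ₀ / (H ^ 2 + r ^ 2))
          / ((c1 + c2 / (g ^ 2 * r ^ 2)) * V ^ 3 + c2 / V)
        ≤ B * Real.logb 2 (1 + γ₀ / (H ^ 2 + r ^ 2))
          / ((c1 + c2 / (g ^ 2 * r ^ 2))
              * ((c2 / (3 * (c1 + c2 / (g ^ 2 * r ^ 2)))) ^ ((1:ℝ)/4)) ^ 3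
            + c2 / ((c2 / (3 * (c1 + c2 / (g ^ 2 * r ^ 2)))) ^ ((1:ℝ)/4)))) ∧
    (c1 + c2 / (g ^ 2 * r ^ 2))
        * ((c2 / (3 * (c1 + c2 / (g ^ 2 * r ^ 2)))) ^ ((1:ℝ)/4)) ^ 3
      + c2 / ((c2 / (3 * (c1 + c2 / (g ^ 2 * r ^ 2)))) ^ ((1:ℝ)/4))
      = ((3:ℝ) ^ (-(3:ℝ)/4) + (3:ℝ) ^ ((1:ℝ)/4)) * c2 ^ ((3:ℝ)/4)
          * (c1 + c2 / (g ^ 2 * r ^ 2)) ^ ((1:ℝ)/4) := by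
  set a := c1 + c2 / (g ^ 2 * r ^ 2) with hadef
  have ha : 0 < a := by rw [hadef]; positivity
  set x := a ^ ((1:ℝ)/4) with hxdef
  set y := c2 ^ ((1:ℝ)/4) with hydef
  set t := (3:ℝ) ^ ((1:ℝ)/4) with htdef
  have hx : 0 < x := rpow_pos_of_pos ha _
  have hy : 0 < y := rpow_pos_of_pos hc2 _
  have ht : 0 < t := rpow_pos_of_pos (by norm_num) _
  have hx4 : x ^ (4:ℕ) = a := by
    rw [hxdef, ← rpow_natCast (a ^ ((1:ℝ)/4)) 4, ← rpow_mul ha.le]; norm_num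
  have hy4 : y ^ (4:ℕ) = c2 := by
    rw [hydef, ← rpow_natCast (c2 ^ ((1:ℝ)/4)) 4, ← rpow_mul hc2.le]; norm_num
  have ht4 : t ^ (4:ℕ) = 3 := by
    rw [htdef, ← rpow_natCast ((3:ℝ) ^ ((1:ℝ)/4)) 4, ← rpow_mul (by norm_num : (0:ℝ) ≤ 3)]
    norm_num
  have hW : (c2 / (3 * a)) ^ ((1:ℝ)/4) = y / (t * x) := by
    have h1 : c2 / (3 * a) = (y / (t * x)) ^ (4:ℕ) := by
      rw [div_pow, mul_pow, hx4, hy4, ht4]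
    rw [h1, ← rpow_natCast (y / (t * x)) 4, ← rpow_mul (by positivity)]
    norm_num
  set W := y / (t * x) with hWdef
  have hWpos : 0 < W := by positivity
  have hc2eq : c2 = 3 * a * W ^ 4 := by
    rw [hWdef, div_pow, mul_pow, hx4, hy4, ht4]
    field_simp
  have hval : a * W ^ 3 + c2 / W
      = ((3:ℝ) ^ (-(3:ℝ)/4) + (3:ℝ) ^ ((1:ℝ)/4)) * c2 ^ ((3:ℝ)/4) * a ^ ((1:ℝ)/4) := by
    have hr1 : (3:ℝ) ^ (-(3:ℝ)/4) = 1 / t ^ 3 := by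
      have ht3 : t ^ (3:ℕ) = (3:ℝ) ^ ((3:ℝ)/4) := by
        rw [htdef, ← rpow_natCast ((3:ℝ) ^ ((1:ℝ)/4)) 3,
          ← rpow_mul (by norm_num : (0:ℝ) ≤ 3)]
        norm_num
      rw [ht3, neg_div, rpow_neg (by norm_num : (0:ℝ) ≤ 3)]
      rw [one_div]
    have hr3 : c2 ^ ((3:ℝ)/4) = y ^ 3 := by
      rw [hydef, ← rpow_natCast (c2 ^ ((1:ℝ)/4)) 3, ← rpow_mul hc2.le]; norm_num
    rw [hr1, hr3, ← hxdef, ← hx4, ← hy4, hWdef]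
    field_simp
    ring
  have hPpos : 0 < a * W ^ 3 + c2 / W := by positivity
  have key : ∀ V > (0:ℝ), a * W ^ 3 + c2 / W ≤ a * V ^ 3 + c2 / V := by
    intro V hV
    have hdiff : a * V ^ 3 + c2 / V - (a * W ^ 3 + c2 / W)
        = a * (V - W) ^ 2 * (V ^ 2 + 2 * V * W + 3 * W ^ 2) / V := by
      rw [hc2eq]
      field_simp
      ring
    have hnn : (0:ℝ) ≤ a * (V - W) ^ 2 * (V ^ 2 + 2 * V * W + 3 * W ^ 2) / V := by positivity
    linarith [hdiff ▸ hnn]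
  constructor
  · intro V hV
    rw [hW]
    have hN : 0 ≤ B * Real.logb 2 (1 + γ₀ / (H ^ 2 + r ^ 2)) := by
      apply mul_nonneg hB.le
      apply Real.logb_nonneg (by norm_num)
      have : 0 ≤ γ₀ / (H ^ 2 + r ^ 2) := by positivity
      linarith
    have hDpos : 0 < a * V ^ 3 + c2 / V := by positivity
    exact div_le_div_of_nonneg_left hN hPpos (key V hV)
  · rw [hW]
    exact hval
end

section
/- Let c1, c2, g, H > 0. The function η̃(z) = (γ₀/(H² + z)) / (c1 + c2/(g²z))^(1/4), z > 0, attains its maximum at z* = (3c2/(8c1g²))·(√(1 + 16H²c1g²/(9c2)) − 1), i.e., z* is a critical point of η̃ and maximizes it on (0, ∞). -/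
/-!
Logarithmic differentiation gives `η̃'(z) = -η̃(z) q(z) / (4z(H² + z)(c1 g² z + c2))` with
`q(z) = 4 c1 g² z² + 3 c2 z - c2 H²`. The number `z*` is the positive root of `q`, so
`q(z) = (z - z*)(4 c1 g² (z + z*) + 3 c2)`: `η̃` increases on `(0, z*]` and decreases on
`[z*, ∞)`, and the first-derivative test gives the global maximum.
-/

open Real Set

noncomputable def lowSnrEfficiency (γ₀ H c1 c2 g z : ℝ) : ℝ :=
  (γ₀ / (H ^ 2 + z)) / (c1 + c2 / (g ^ 2 * z)) ^ ((1 : ℝ) / 4)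

noncomputable def optimalRadiusSq (c1 c2 g H : ℝ) : ℝ :=
  3 * c2 / (8 * c1 * g ^ 2) * (√(1 + 16 * H ^ 2 * c1 * g ^ 2 / (9 * c2)) - 1)

section

variable {γ₀ H c1 c2 g z : ℝ}

lemma lowSnrEfficiency_nonneg (hγ : 0 ≤ γ₀) (hc1 : 0 < c1) (hc2 : 0 ≤ c2) (hz : 0 < z) :
    0 ≤ lowSnrEfficiency γ₀ H c1 c2 g z := by
  unfold lowSnrEfficiency; positivity

lemma hasDerivAt_lowSnrEfficiency (hc1 : 0 < c1) (hc2 : 0 < c2) (hg : g ≠ 0) (hz : 0 < z) :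
    HasDerivAt (lowSnrEfficiency γ₀ H c1 c2 g)
      (-lowSnrEfficiency γ₀ H c1 c2 g z * (4 * c1 * g ^ 2 * z ^ 2 + 3 * c2 * z - c2 * H ^ 2)
        / (4 * z * (H ^ 2 + z) * (c1 * g ^ 2 * z + c2))) z := by
  have hgz : 0 < g ^ 2 * z := by positivity
  have hb : 0 < c1 + c2 / (g ^ 2 * z) := by positivity
  have hfirst := (hasDerivAt_const z γ₀).fun_div ((hasDerivAt_id' z).const_add (H ^ 2))
    (by positivity : H ^ 2 + z ≠ 0)
  have hsecond := (((hasDerivAt_const z c2).fun_div ((hasDerivAt_id' z).const_mul (g ^ 2))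
    hgz.ne').const_add c1).rpow_const (p := 1 / 4) (Or.inl hb.ne')
  refine (hfirst.fun_div hsecond (rpow_pos_of_pos hb _).ne').congr_deriv ?_
  rw [rpow_sub hb, rpow_one]
  unfold lowSnrEfficiency
  have hX := rpow_pos_of_pos hb (1 / 4)
  set X := (c1 + c2 / (g ^ 2 * z)) ^ ((1 : ℝ) / 4)
  field_simp
  ring

lemma optimalRadiusSq_pos (hc1 : 0 < c1) (hc2 : 0 < c2) (hg : g ≠ 0) (hH : H ≠ 0) :
    0 < optimalRadiusSq c1 c2 g H := by
  have hK : 0 < √(1 + 16 * H ^ 2 * c1 * g ^ 2 / (9 * c2)) - 1 :=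
    sub_pos.2 (lt_sqrt_of_sq_lt (by simp only [one_pow, lt_add_iff_pos_right]; positivity))
  unfold optimalRadiusSq
  positivity

lemma optimalRadiusSq_isRoot (hc1 : 0 < c1) (hc2 : 0 < c2) (hg : g ≠ 0) :
    4 * c1 * g ^ 2 * optimalRadiusSq c1 c2 g H ^ 2 + 3 * c2 * optimalRadiusSq c1 c2 g H
      - c2 * H ^ 2 = 0 := by
  have hsq := sq_sqrt (by positivity : 0 ≤ 1 + 16 * H ^ 2 * c1 * g ^ 2 / (9 * c2))
  unfold optimalRadiusSq
  set K := √(1 + 16 * H ^ 2 * c1 * g ^ 2 / (9 * c2))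
  field_simp at hsq ⊢
  linear_combination 4 * c2 * hsq

lemma isMaxOn_lowSnrEfficiency (hγ : 0 ≤ γ₀) (hc1 : 0 < c1) (hc2 : 0 < c2) (hg : g ≠ 0)
    (hH : H ≠ 0) :
    IsMaxOn (lowSnrEfficiency γ₀ H c1 c2 g) (Ioi 0) (optimalRadiusSq c1 c2 g H) := by
  set f := lowSnrEfficiency γ₀ H c1 c2 g
  set s := optimalRadiusSq c1 c2 g H
  have hs : 0 < s := optimalRadiusSq_pos hc1 hc2 hg hH
  have hroot := optimalRadiusSq_isRoot (H := H) hc1 hc2 hg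
  have hderiv : ∀ z, 0 < z → HasDerivAt f
      (f z * (s - z) * (4 * c1 * g ^ 2 * (z + s) + 3 * c2)
        / (4 * z * (H ^ 2 + z) * (c1 * g ^ 2 * z + c2))) z := fun z hz =>
    (hasDerivAt_lowSnrEfficiency hc1 hc2 hg hz).congr_deriv
      (by congr 1; linear_combination (-f z) * hroot)
  have hf : ∀ z, 0 < z → 0 ≤ f z := fun z hz =>
    lowSnrEfficiency_nonneg hγ hc1 hc2.le hz
  refine isMaxOn_Ioi_of_deriv (hderiv s hs).continuousAt
    (fun z hz => (hderiv z hz.1).differentiableAt.differentiableWithinAt)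
    (fun z hz => (hderiv z (hs.trans hz)).differentiableAt.differentiableWithinAt)
    (fun z hz => ?_) (fun z hz => ?_)
  · have hz₀ : 0 < z := hz.1
    rw [(hderiv z hz₀).deriv]
    exact div_nonneg (mul_nonneg (mul_nonneg (hf z hz₀) (sub_nonneg.2 hz.2.le)) (by positivity))
      (by positivity)
  · have hz₀ : 0 < z := hs.trans hz
    rw [(hderiv z hz₀).deriv]
    exact div_nonpos_of_nonpos_of_nonneg (mul_nonpos_of_nonpos_of_nonneg
      (mul_nonpos_of_nonneg_of_nonpos (hf z hz₀) (sub_nonpos.2 (le_of_lt hz))) (by positivity))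
      (by positivity)

end

theorem stmt_8 (c1 c2 g H γ₀ : ℝ) (hc1 : 0 < c1) (hc2 : 0 < c2) (hg : 0 < g)
    (hH : 0 < H) (hγ : 0 < γ₀) :
    HasDerivAt (fun z : ℝ => (γ₀ / (H ^ 2 + z)) / (c1 + c2 / (g ^ 2 * z)) ^ ((1:ℝ)/4)) 0
        ((3 * c2 / (8 * c1 * g ^ 2))
          * (Real.sqrt (1 + 16 * H ^ 2 * c1 * g ^ 2 / (9 * c2)) - 1)) ∧
    ∀ z > (0:ℝ),
      (γ₀ / (H ^ 2 + z)) / (c1 + c2 / (g ^ 2 * z)) ^ ((1:ℝ)/4)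
        ≤ (γ₀ / (H ^ 2 + ((3 * c2 / (8 * c1 * g ^ 2))
              * (Real.sqrt (1 + 16 * H ^ 2 * c1 * g ^ 2 / (9 * c2)) - 1))))
          / (c1 + c2 / (g ^ 2 * ((3 * c2 / (8 * c1 * g ^ 2))
              * (Real.sqrt (1 + 16 * H ^ 2 * c1 * g ^ 2 / (9 * c2)) - 1)))) ^ ((1:ℝ)/4) := by
  have hderiv := hasDerivAt_lowSnrEfficiency (γ₀ := γ₀) (H := H) hc1 hc2 hg.ne'
    (optimalRadiusSq_pos hc1 hc2 hg.ne' hH.ne')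
  rw [optimalRadiusSq_isRoot hc1 hc2 hg.ne', mul_zero, zero_div] at hderiv
  exact ⟨hderiv, fun z hz => isMaxOn_iff.mp
    (isMaxOn_lowSnrEfficiency hγ.le hc1 hc2 hg.ne' hH.ne') z hz⟩
end

section
/- Let H > 0, γ₀ ≥ 0, B > 0 and q, q₀ ∈ ℝ². Then B·log₂(1 + γ₀/(H² + ‖q‖²)) ≥ B·[log₂(1 + γ₀/(H² + ‖q₀‖²)) − (log₂ e)·γ₀·(‖q‖² − ‖q₀‖²) / ((H² + γ₀ + ‖q₀‖²)·(H² + ‖q₀‖²))], with equality when q = q₀. -/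
/-! The rate is a function of the squared distance `a = H² + ‖q‖²`, and
`a ↦ log (1 + γ / a) = log (a + γ) - log a` is convex on `a > 0` when `γ ≥ 0`,
so it lies above its tangent line at `a₀`; the right-hand side is exactly that tangent,
with slope `-γ / ((a₀ + γ) a₀)`. -/

open Real

lemma log_one_add_div_sub_tangent_le {γ a a₀ : ℝ} (hγ : 0 ≤ γ) (ha : 0 < a) (ha₀ : 0 < a₀) :
    log (1 + γ / a₀) - γ * (a - a₀) / ((a₀ + γ) * a₀) ≤ log (1 + γ / a) := by
  have hpos : 0 < 1 + γ / a := by positivity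
  have hratio : (1 + γ / a₀) / (1 + γ / a) - 1 = γ * (a - a₀) / ((a + γ) * a₀) := by
    field_simp
    ring
  have hslope : γ * (a - a₀) / ((a + γ) * a₀) ≤ γ * (a - a₀) / ((a₀ + γ) * a₀) := by
    rw [div_le_div_iff₀ (by positivity) (by positivity)]
    nlinarith [mul_nonneg (mul_nonneg hγ (sq_nonneg (a - a₀))) ha₀.le]
  calc log (1 + γ / a₀) - γ * (a - a₀) / ((a₀ + γ) * a₀)
      ≤ log (1 + γ / a₀) - ((1 + γ / a₀) / (1 + γ / a) - 1) := by linarith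
    _ ≤ log (1 + γ / a₀) - log ((1 + γ / a₀) / (1 + γ / a)) := by
      gcongr
      exact log_le_sub_one_of_pos (by positivity)
    _ = log (1 + γ / a) := by
      rw [log_div (by positivity) hpos.ne']
      ring

lemma logb_one_add_div_sub_tangent_le {b γ a a₀ : ℝ} (hb : 1 < b) (hγ : 0 ≤ γ) (ha : 0 < a)
    (ha₀ : 0 < a₀) :
    logb b (1 + γ / a₀) - logb b (exp 1) * γ * (a - a₀) / ((a₀ + γ) * a₀)
      ≤ logb b (1 + γ / a) := by
  have hlogb : 0 < log b := log_pos hb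
  have hexp : logb b (exp 1) * γ * (a - a₀) / ((a₀ + γ) * a₀)
      = γ * (a - a₀) / ((a₀ + γ) * a₀) / log b := by
    rw [logb, log_exp]
    ring
  rw [hexp, logb, logb, div_sub_div_same]
  gcongr
  exact log_one_add_div_sub_tangent_le hγ ha ha₀

theorem stmt_10 (H γ₀ B : ℝ) (hH : 0 < H) (hγ : 0 ≤ γ₀) (hB : 0 < B)
    (q q₀ : EuclideanSpace ℝ (Fin 2)) :
    B * Real.logb 2 (1 + γ₀ / (H ^ 2 + ‖q‖ ^ 2))
      ≥ B * (Real.logb 2 (1 + γ₀ / (H ^ 2 + ‖q₀‖ ^ 2))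
        - (Real.logb 2 (Real.exp 1)) * γ₀ * (‖q‖ ^ 2 - ‖q₀‖ ^ 2)
            / ((H ^ 2 + γ₀ + ‖q₀‖ ^ 2) * (H ^ 2 + ‖q₀‖ ^ 2))) ∧
    (q = q₀ →
      B * Real.logb 2 (1 + γ₀ / (H ^ 2 + ‖q‖ ^ 2))
        = B * (Real.logb 2 (1 + γ₀ / (H ^ 2 + ‖q₀‖ ^ 2))
          - (Real.logb 2 (Real.exp 1)) * γ₀ * (‖q‖ ^ 2 - ‖q₀‖ ^ 2)
              / ((H ^ 2 + γ₀ + ‖q₀‖ ^ 2) * (H ^ 2 + ‖q₀‖ ^ 2)))) := by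
  refine ⟨?_, fun hq => by simp [hq]⟩
  have htangent := logb_one_add_div_sub_tangent_le (b := 2) one_lt_two hγ
    (a := H ^ 2 + ‖q‖ ^ 2) (a₀ := H ^ 2 + ‖q₀‖ ^ 2) (by positivity) (by positivity)
  refine mul_le_mul_of_nonneg_left (le_of_eq_of_le ?_ htangent) hB.le
  ring_nf
end

section
/- Let c1, c2, g, m > 0 and T > 0. For any continuously differentiable velocity trajectory v : [0,T] → ℝ² with v(t) ≠ 0 for all t, the propulsion energy E(v) = ∫₀ᵀ [c1‖v(t)‖³ + (c2/‖v(t)‖)(1 + (‖v'(t)‖² − (⟨v'(t),v(t)⟩)²/‖v(t)‖²)/g²)] dt satisfies E(v) ≥ T·(3^(-3/4) + 3^(1/4))·c1^(1/4)·c2^(3/4), with equality achieved by the constant trajectory v(t) = (c2/(3c1))^(1/4)·u for any fixed unit vector u. -/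
open Real MeasureTheory intervalIntegral
open scoped RealInnerProductSpace

/-!
By Cauchy–Schwarz the acceleration term `‖v'‖² - ⟪v', v⟫² / ‖v‖²` (the squared component of `v'`
orthogonal to `v`) is nonnegative, so the integrand is at least `c1 V³ + c2 / V` with `V = ‖v t‖`.
On `V > 0` this function is minimised at the critical point `W` with `c2 = 3 c1 W⁴`, where it
equals `(3^(-3/4) + 3^(1/4)) c1^(1/4) c2^(3/4)`. The constant trajectory of speed `W` has zero
acceleration, so its integrand is exactly this minimum.
-/

section DragPower

variable {E : Type*} [NormedAddCommGroup E] [InnerProductSpace ℝ E]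

noncomputable def dragPower (c1 c2 g : ℝ) (x a : E) : ℝ :=
  c1 * ‖x‖ ^ 3 + (c2 / ‖x‖) * (1 + (‖a‖ ^ 2 - ⟪a, x⟫ ^ 2 / ‖x‖ ^ 2) / g ^ 2)

@[simp]
lemma dragPower_zero_right (c1 c2 g : ℝ) (x : E) :
    dragPower c1 c2 g x 0 = c1 * ‖x‖ ^ 3 + c2 / ‖x‖ := by
  simp [dragPower]

lemma inner_sq_div_norm_sq_le_norm_sq (a x : E) : ⟪a, x⟫ ^ 2 / ‖x‖ ^ 2 ≤ ‖a‖ ^ 2 := by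
  rcases eq_or_ne x 0 with rfl | hx
  · simp
  rw [div_le_iff₀ (by positivity), ← mul_pow, ← sq_abs]
  exact pow_le_pow_left₀ (abs_nonneg _) (abs_real_inner_le_norm a x) 2

lemma cubic_add_div_le_dragPower {c2 : ℝ} (hc2 : 0 ≤ c2) (c1 g : ℝ) (x a : E) :
    c1 * ‖x‖ ^ 3 + c2 / ‖x‖ ≤ dragPower c1 c2 g x a := by
  have hperp : 0 ≤ (‖a‖ ^ 2 - ⟪a, x⟫ ^ 2 / ‖x‖ ^ 2) / g ^ 2 :=
    div_nonneg (sub_nonneg.2 (inner_sq_div_norm_sq_le_norm_sq a x)) (sq_nonneg g)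
  unfold dragPower
  gcongr
  exact le_mul_of_one_le_right (by positivity) (le_add_of_nonneg_right hperp)

lemma Continuous.dragPower {v w : ℝ → E} (hv : Continuous v) (hw : Continuous w)
    (hv0 : ∀ t, v t ≠ 0) (c1 c2 g : ℝ) :
    Continuous fun t => dragPower c1 c2 g (v t) (w t) := by
  have hn : ∀ t, ‖v t‖ ≠ 0 := fun t => norm_ne_zero_iff.2 (hv0 t)
  unfold _root_.dragPower
  fun_prop (disch := simp [hn])

end DragPower

lemma cubic_add_div_le_of_eq_mul_pow_four {c1 c2 V W : ℝ} (hc1 : 0 ≤ c1) (hV : 0 < V) (hW : 0 < W)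
    (hc2 : c2 = 3 * c1 * W ^ 4) :
    c1 * W ^ 3 + c2 / W ≤ c1 * V ^ 3 + c2 / V := by
  -- `W` is a critical point, hence a double root of the difference.
  have key : c1 * V ^ 3 + c2 / V - (c1 * W ^ 3 + c2 / W)
      = c1 / V * (V - W) ^ 2 * (V ^ 2 + 2 * V * W + 3 * W ^ 2) := by
    subst hc2; field_simp; ring
  rw [← sub_nonneg, key]
  positivity

lemma eq_three_mul_mul_rpow_quarter_pow_four {c1 : ℝ} (hc1 : 0 < c1) {c2 : ℝ} (hc2 : 0 ≤ c2) :
    c2 = 3 * c1 * ((c2 / (3 * c1)) ^ ((1:ℝ)/4)) ^ 4 := by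
  rw [← rpow_natCast, ← rpow_mul (by positivity)]
  norm_num
  field_simp

lemma cubic_add_div_at_critical {c1 c2 : ℝ} (hc1 : 0 < c1) (hc2 : 0 < c2) :
    c1 * ((c2 / (3 * c1)) ^ ((1:ℝ)/4)) ^ 3 + c2 / (c2 / (3 * c1)) ^ ((1:ℝ)/4)
      = ((3:ℝ) ^ (-(3:ℝ)/4) + (3:ℝ) ^ ((1:ℝ)/4)) * c1 ^ ((1:ℝ)/4) * c2 ^ ((3:ℝ)/4) := by
  have hc2W := eq_three_mul_mul_rpow_quarter_pow_four hc1 hc2.le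
  set W := (c2 / (3 * c1)) ^ ((1:ℝ)/4) with hW
  have hW0 : 0 < W := by positivity
  have hW3 : W ^ 3 = (3:ℝ) ^ (-(3:ℝ)/4) * c1 ^ (-(3:ℝ)/4) * c2 ^ ((3:ℝ)/4) := by
    rw [hW, ← rpow_natCast, ← rpow_mul (by positivity), div_rpow hc2.le (by positivity),
      mul_rpow (by norm_num) hc1.le, neg_div, rpow_neg (by norm_num), rpow_neg hc1.le]
    norm_num
    ring
  have h3 : (3:ℝ) ^ ((1:ℝ)/4) = 3 * (3:ℝ) ^ (-(3:ℝ)/4) := by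
    rw [← rpow_one_add' (by norm_num) (by norm_num)]; norm_num
  have hc1' : c1 * c1 ^ (-(3:ℝ)/4) = c1 ^ ((1:ℝ)/4) := by
    rw [← rpow_one_add' hc1.le (by norm_num)]; norm_num
  calc c1 * W ^ 3 + c2 / W = 4 * (c1 * W ^ 3) := by
        rw [hc2W]; field_simp; ring
    _ = _ := by rw [hW3, h3, ← hc1']; ring

theorem stmt_13_general (c1 c2 g T : ℝ) (hc1 : 0 < c1) (hc2 : 0 < c2) (hT : 0 < T) :
    (∀ v : ℝ → EuclideanSpace ℝ (Fin 2), ContDiff ℝ 1 v → (∀ t, v t ≠ 0) →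
      T * (((3:ℝ) ^ (-(3:ℝ)/4) + (3:ℝ) ^ ((1:ℝ)/4)) * c1 ^ ((1:ℝ)/4) * c2 ^ ((3:ℝ)/4))
        ≤ ∫ t in (0:ℝ)..T,
            (c1 * ‖v t‖ ^ 3
              + (c2 / ‖v t‖)
                * (1 + (‖deriv v t‖ ^ 2 - ⟪deriv v t, v t⟫ ^ 2 / ‖v t‖ ^ 2) / g ^ 2))) ∧
    (∀ u : EuclideanSpace ℝ (Fin 2), ‖u‖ = 1 →
      (∫ t in (0:ℝ)..T,
          (c1 * ‖(fun _ : ℝ => ((c2 / (3 * c1)) ^ ((1:ℝ)/4) : ℝ) • u) t‖ ^ 3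
            + (c2 / ‖(fun _ : ℝ => ((c2 / (3 * c1)) ^ ((1:ℝ)/4) : ℝ) • u) t‖)
              * (1 + (‖deriv (fun _ : ℝ => ((c2 / (3 * c1)) ^ ((1:ℝ)/4) : ℝ) • u) t‖ ^ 2
                  - ⟪deriv (fun _ : ℝ => ((c2 / (3 * c1)) ^ ((1:ℝ)/4) : ℝ) • u) t,
                      (fun _ : ℝ => ((c2 / (3 * c1)) ^ ((1:ℝ)/4) : ℝ) • u) t⟫ ^ 2
                    / ‖(fun _ : ℝ => ((c2 / (3 * c1)) ^ ((1:ℝ)/4) : ℝ) • u) t‖ ^ 2) / g ^ 2)))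
        = T * (((3:ℝ) ^ (-(3:ℝ)/4) + (3:ℝ) ^ ((1:ℝ)/4)) * c1 ^ ((1:ℝ)/4) * c2 ^ ((3:ℝ)/4))) := by
  rw [← cubic_add_div_at_critical hc1 hc2]
  have hc2W := eq_three_mul_mul_rpow_quarter_pow_four hc1 hc2.le
  set W := (c2 / (3 * c1)) ^ ((1:ℝ)/4)
  have hW0 : 0 < W := by positivity
  refine ⟨fun v hv hv0 => ?_, fun u hu => ?_⟩
  · have hint : IntervalIntegrable (fun t => dragPower c1 c2 g (v t) (deriv v t)) volume 0 T :=
      (hv.continuous.dragPower (hv.continuous_deriv le_rfl) hv0 c1 c2 g).intervalIntegrable _ _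
    calc T * (c1 * W ^ 3 + c2 / W) = ∫ _ in (0:ℝ)..T, (c1 * W ^ 3 + c2 / W) := by
          rw [intervalIntegral.integral_const, smul_eq_mul, sub_zero]
      _ ≤ ∫ t in (0:ℝ)..T, dragPower c1 c2 g (v t) (deriv v t) :=
        integral_mono_on hT.le intervalIntegrable_const hint fun t _ =>
          (cubic_add_div_le_of_eq_mul_pow_four hc1.le (norm_pos_iff.2 (hv0 t)) hW0 hc2W).trans
            (cubic_add_div_le_dragPower hc2.le c1 g (v t) (deriv v t))
  · have hWu : ‖W • u‖ = W := by rw [norm_smul, hu, mul_one, norm_of_nonneg hW0.le]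
    change ∫ t in (0:ℝ)..T, dragPower c1 c2 g (W • u) (deriv (fun _ => W • u) t) = _
    simp only [deriv_const', dragPower_zero_right, hWu, intervalIntegral.integral_const,
      smul_eq_mul, sub_zero]

theorem stmt_13 (c1 c2 g m T : ℝ) (hc1 : 0 < c1) (hc2 : 0 < c2) (hg : 0 < g)
    (hm : 0 < m) (hT : 0 < T) :
    (∀ v : ℝ → EuclideanSpace ℝ (Fin 2), ContDiff ℝ 1 v → (∀ t, v t ≠ 0) →
      T * (((3:ℝ) ^ (-(3:ℝ)/4) + (3:ℝ) ^ ((1:ℝ)/4)) * c1 ^ ((1:ℝ)/4) * c2 ^ ((3:ℝ)/4))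
        ≤ ∫ t in (0:ℝ)..T,
            (c1 * ‖v t‖ ^ 3
              + (c2 / ‖v t‖)
                * (1 + (‖deriv v t‖ ^ 2 - ⟪deriv v t, v t⟫ ^ 2 / ‖v t‖ ^ 2) / g ^ 2))) ∧
    (∀ u : EuclideanSpace ℝ (Fin 2), ‖u‖ = 1 →
      (∫ t in (0:ℝ)..T,
          (c1 * ‖(fun _ : ℝ => ((c2 / (3 * c1)) ^ ((1:ℝ)/4) : ℝ) • u) t‖ ^ 3
            + (c2 / ‖(fun _ : ℝ => ((c2 / (3 * c1)) ^ ((1:ℝ)/4) : ℝ) • u) t‖)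
              * (1 + (‖deriv (fun _ : ℝ => ((c2 / (3 * c1)) ^ ((1:ℝ)/4) : ℝ) • u) t‖ ^ 2
                  - ⟪deriv (fun _ : ℝ => ((c2 / (3 * c1)) ^ ((1:ℝ)/4) : ℝ) • u) t,
                      (fun _ : ℝ => ((c2 / (3 * c1)) ^ ((1:ℝ)/4) : ℝ) • u) t⟫ ^ 2
                    / ‖(fun _ : ℝ => ((c2 / (3 * c1)) ^ ((1:ℝ)/4) : ℝ) • u) t‖ ^ 2) / g ^ 2)))
        = T * (((3:ℝ) ^ (-(3:ℝ)/4) + (3:ℝ) ^ ((1:ℝ)/4)) * c1 ^ ((1:ℝ)/4) * c2 ^ ((3:ℝ)/4))) :=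
  stmt_13_general c1 c2 g T hc1 hc2 hT
end

section
/- For H > 0, γ₀ ≥ 0, V > 0, T > 0 and B > 0, ∫₀ᵀ B·log₂(1 + γ₀/(H² + (−VT/2 + Vt)²)) dt = (4B/((ln 2)V))·[(VT/4)·ln(1 + γ₀/(H² + (VT/2)²)) + √(H² + γ₀)·arctan(VT/(2√(H² + γ₀))) − H·arctan(VT/(2H))]. -/
/-!
Substituting `x = V t - V T / 2` turns the integral into `1 / V` times the integral of
`log (1 + γ₀ / (H² + x²)) = log (H² + γ₀ + x²) - log (H² + x²)` over `[-V T / 2, V T / 2]`,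
and `x ↦ x log (c + x²) - 2x + 2 √c arctan (x / √c)` is an odd antiderivative of `log (c + x²)`.
-/

open Real MeasureTheory intervalIntegral

theorem hasDerivAt_mul_log_add_sq_add_arctan {c : ℝ} (hc : 0 < c) (x : ℝ) :
    HasDerivAt (fun y => y * log (c + y ^ 2) + 2 * √c * arctan (y / √c))
      (log (c + x ^ 2) + 2) x := by
  have hlog : HasDerivAt (fun y => log (c + y ^ 2)) (2 * x / (c + x ^ 2)) x := by
    simpa using ((hasDerivAt_pow 2 x).const_add c).log (by positivity)
  have harctan : HasDerivAt (fun y => arctan (y / √c)) (1 / (1 + (x / √c) ^ 2) * (1 / √c)) x :=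
    (hasDerivAt_arctan _).comp x (by simpa using (hasDerivAt_id x).div_const √c)
  refine (((hasDerivAt_id' x).mul hlog).add (harctan.const_mul (2 * √c))).congr_deriv ?_
  have : 1 + (x / √c) ^ 2 ≠ 0 := by positivity
  field_simp
  rw [sq_sqrt hc.le]
  ring

theorem continuous_log_add_sq {c : ℝ} (hc : 0 < c) : Continuous fun x : ℝ => log (c + x ^ 2) :=
  (continuous_const.add (continuous_pow 2)).log fun x => (by positivity : 0 < c + x ^ 2).ne'

theorem integral_log_add_sq_neg {c : ℝ} (hc : 0 < c) (a : ℝ) :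
    ∫ x in -a..a, log (c + x ^ 2)
      = 2 * (a * log (c + a ^ 2) + 2 * √c * arctan (a / √c) - 2 * a) := by
  rw [integral_eq_sub_of_hasDerivAt
    (fun x _ => ((hasDerivAt_mul_log_add_sq_add_arctan hc x).sub
      ((hasDerivAt_id' x).const_mul 2)).congr_deriv (by ring))
    ((continuous_log_add_sq hc).intervalIntegrable _ _)]
  simp only [Pi.sub_apply, neg_sq, neg_div, arctan_neg]
  ring

theorem integral_log_one_add_div_sq_add_sq_neg {h γ : ℝ} (hh : 0 < h) (hγ : 0 ≤ γ) (a : ℝ) :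
    ∫ x in -a..a, log (1 + γ / (h ^ 2 + x ^ 2))
      = 2 * (a * log (1 + γ / (h ^ 2 + a ^ 2)) + 2 * √(h ^ 2 + γ) * arctan (a / √(h ^ 2 + γ))
          - 2 * h * arctan (a / h)) := by
  have hsplit : ∀ x, log (1 + γ / (h ^ 2 + x ^ 2)) = log (h ^ 2 + γ + x ^ 2) - log (h ^ 2 + x ^ 2) :=
    fun x => by
      rw [← log_div (by positivity) (by positivity)]
      congr 1
      field_simp
      ring
  simp only [hsplit]
  rw [integral_sub ((continuous_log_add_sq (by positivity)).intervalIntegrable _ _)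
      ((continuous_log_add_sq (by positivity)).intervalIntegrable _ _),
    integral_log_add_sq_neg (by positivity), integral_log_add_sq_neg (by positivity),
    sqrt_sq hh.le]
  ring

theorem stmt_15_general (H γ₀ V T B : ℝ) (hH : 0 < H) (hγ : 0 ≤ γ₀) (hV : 0 < V) :
    ∫ t in (0:ℝ)..T, B * Real.logb 2 (1 + γ₀ / (H ^ 2 + (-(V * T) / 2 + V * t) ^ 2))
      = (4 * B / (Real.log 2 * V))
        * ((V * T / 4) * Real.log (1 + γ₀ / (H ^ 2 + (V * T / 2) ^ 2))
          + Real.sqrt (H ^ 2 + γ₀) * Real.arctan (V * T / (2 * Real.sqrt (H ^ 2 + γ₀)))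
          - H * Real.arctan (V * T / (2 * H))) := by
  have hleft : -(V * T) / 2 + V * 0 = -(V * T / 2) := by ring
  have hright : -(V * T) / 2 + V * T = V * T / 2 := by ring
  calc ∫ t in (0:ℝ)..T, B * logb 2 (1 + γ₀ / (H ^ 2 + (-(V * T) / 2 + V * t) ^ 2))
      = B / log 2 * ∫ t in (0:ℝ)..T, log (1 + γ₀ / (H ^ 2 + (-(V * T) / 2 + V * t) ^ 2)) := by
        rw [← intervalIntegral.integral_const_mul]
        simp only [logb, mul_div_assoc', div_mul_eq_mul_div]
    _ = B / log 2 * (V⁻¹ * ∫ x in -(V * T / 2)..V * T / 2, log (1 + γ₀ / (H ^ 2 + x ^ 2))) := by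
        rw [integral_comp_add_mul (fun x => log (1 + γ₀ / (H ^ 2 + x ^ 2))) hV.ne',
          hleft, hright, smul_eq_mul]
    _ = _ := by
        rw [integral_log_one_add_div_sq_add_sq_neg hH hγ]
        field_simp
        ring

theorem stmt_15 (H γ₀ V T B : ℝ) (hH : 0 < H) (hγ : 0 ≤ γ₀) (hV : 0 < V)
    (hT : 0 < T) (hB : 0 < B) :
    ∫ t in (0:ℝ)..T, B * Real.logb 2 (1 + γ₀ / (H ^ 2 + (-(V * T) / 2 + V * t) ^ 2))
      = (4 * B / (Real.log 2 * V))
        * ((V * T / 4) * Real.log (1 + γ₀ / (H ^ 2 + (V * T / 2) ^ 2))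
          + Real.sqrt (H ^ 2 + γ₀) * Real.arctan (V * T / (2 * Real.sqrt (H ^ 2 + γ₀)))
          - H * Real.arctan (V * T / (2 * H))) :=
  stmt_15_general H γ₀ V T B hH hγ hV
end
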